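/- arXiv:1503.07399 — 7 statements merged into one kernel-verified Lean document; each statement's English description precedes it below -/
import Mathlib

section
/- Let λ be a real number with λ ≠ 0 and λ ≠ 1, and let (x, y, z) ∈ ℝ³ satisfy f_λ(x, y, z) = 0. Define the tangent-plane coordinates u1 = 2x/(1−λ), u2 = 2(y−λ+1/2)/(1−λ+λ²), u3 = 2z/λ (the gradient of f_λ at the point), and u0 = −(u1·x + u2·y + u3·z). Then (1−λ)·(4u0² − 4u0u2 − 4u1² − 3u2²) + λ·(4u0² + 4u0u2 − 3u2² − 4u3²) = 0; that is, every tangent plane of the quadric Q_λ = {f_λ = 0} satisfies the tangential (plane-coordinate) equation of the system. -/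
/-- The defining function of the inscribed quadric `Q_λ` of the extended oloid. -/
noncomputable def f (l x y z : ℝ) : ℝ :=
  x ^ 2 / (1 - l) + (y - l + 1/2) ^ 2 / (1 - l + l ^ 2) + z ^ 2 / l - 1

/-- Every tangent plane of the quadric `Q_λ = {f_λ = 0}` (in plane coordinates
`u0, u1, u2, u3`, where `(u1,u2,u3)` is the gradient of `f_λ` at the contact point)
satisfies the tangential equation
`(1−λ)(4u0² − 4u0u2 − 4u1² − 3u2²) + λ(4u0² + 4u0u2 − 3u2² − 4u3²) = 0`. -/
theorem stmt_2 (l x y z : ℝ) (h0 : l ≠ 0) (h1 : l ≠ 1) (hf : f l x y z = 0) :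
    let u1 := 2 * x / (1 - l)
    let u2 := 2 * (y - l + 1/2) / (1 - l + l ^ 2)
    let u3 := 2 * z / l
    let u0 := -(u1 * x + u2 * y + u3 * z)
    (1 - l) * (4 * u0 ^ 2 - 4 * u0 * u2 - 4 * u1 ^ 2 - 3 * u2 ^ 2) +
      l * (4 * u0 ^ 2 + 4 * u0 * u2 - 3 * u2 ^ 2 - 4 * u3 ^ 2) = 0 := by
  have hA : (1 : ℝ) - l ≠ 0 := sub_ne_zero.mpr (fun h => h1 h.symm)
  have hBpos : (0 : ℝ) < 1 - l + l ^ 2 := by nlinarith [sq_nonneg (2*l - 1)]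
  have hB : (1 : ℝ) - l + l ^ 2 ≠ 0 := ne_of_gt hBpos
  intro u1 u2 u3 u0
  set a : ℝ := x / (1 - l) with ha
  set b : ℝ := (y - l + 1/2) / (1 - l + l ^ 2) with hb
  set c : ℝ := z / l with hc
  have hx : x = (1 - l) * a := by rw [ha]; field_simp
  have hy : y = (1 - l + l ^ 2) * b + l - 1/2 := by rw [hb]; field_simp; ring
  have hz : z = l * c := by rw [hc]; field_simp
  have key : (1 - l) * a ^ 2 + (1 - l + l ^ 2) * b ^ 2 + l * c ^ 2 = 1 := by
    unfold f at hf
    rw [ha, hb, hc]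
    field_simp at hf ⊢
    linear_combination hf
  have hu1 : u1 = 2 * a := by rw [ha]; simp only [u1]; ring
  have hu2 : u2 = 2 * b := by rw [hb]; simp only [u2]; ring
  have hu3 : u3 = 2 * c := by rw [hc]; simp only [u3]; ring
  simp only [u0, hu1, hu2, hu3]
  rw [hx, hy, hz]
  linear_combination (16 * ((1-l) * a^2 + (1-l+l^2) * b^2 + l * c^2)) * key
end

section
/- Let λ be a real number with λ ≠ 0 and λ ≠ 1, let t ∈ (−2π/3, 2π/3) with 1 + λ·cos t ≠ 0, and set ψ(λ,t) = λ(1+cos t)/(1+λ cos t). Define F(m) = f_λ(ω₁(m,t), ω₂(m,t), ω₃(m,t)). Then: (i) ω₁(ψ(λ,t), t) = κ₁(λ,t), ω₂(ψ(λ,t), t) = κ₂(λ,t), ω₃(ψ(λ,t), t) = κ₃(λ,t); (ii) F(ψ(λ,t)) = 0 and the derivative F′(ψ(λ,t)) = 0. Hence the generating line m ↦ (ω₁(m,t), ω₂(m,t), ω₃(m,t)) of the extended oloid is tangent to the quadric Q_λ = {f_λ = 0}, with contact point (κ₁(λ,t), κ₂(λ,t), κ₃(λ,t)). -/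
open Real

/-- First coordinate of the generating line parametrization of the extended oloid. -/
noncomputable def ω₁ (m t : ℝ) : ℝ := (1 - m) * sin t

/-- Second coordinate of the generating line parametrization of the extended oloid. -/
noncomputable def ω₂ (m t : ℝ) : ℝ :=
  (1 - m) * (-(1/2) - cos t) + m * (1/2 - cos t / (1 + cos t))

/-- Third coordinate of the generating line parametrization of the extended oloid. -/
noncomputable def ω₃ (m t : ℝ) : ℝ := m * Real.sqrt (1 + 2 * cos t) / (1 + cos t)

/-- First coordinate of the touching curve `C_λ`. -/
noncomputable def κ₁ (l t : ℝ) : ℝ := (1 - l) * sin t / (1 + l * cos t)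

/-- Second coordinate of the touching curve `C_λ`. -/
noncomputable def κ₂ (l t : ℝ) : ℝ :=
  (2 * l - 1 + (l - 2) * cos t) / (2 * (1 + l * cos t))

/-- Third coordinate of the touching curve `C_λ`. -/
noncomputable def κ₃ (l t : ℝ) : ℝ :=
  l * Real.sqrt (1 + 2 * cos t) / (1 + l * cos t)

lemma quad_deriv (A B C x : ℝ) : deriv (fun m => A * m ^ 2 + B * m + C) x = 2 * A * x + B := by
  have h : HasDerivAt (fun m : ℝ => A * m ^ 2 + B * m + C) (A * (2 * x ^ 1) + B * 1) x := by
    have h1 : HasDerivAt (fun m : ℝ => m ^ 2) ((2 : ℕ) * x ^ 1) x := hasDerivAt_pow 2 x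
    have h2 : HasDerivAt (fun m : ℝ => m) 1 x := hasDerivAt_id' x
    have := ((h1.const_mul A).add (h2.const_mul B)).add_const C
    simpa using this
  have := h.deriv
  rw [this]; ring

/-- The generating line `m ↦ (ω₁(m,t), ω₂(m,t), ω₃(m,t))` of the extended oloid is
tangent to the quadric `Q_λ = {f_λ = 0}` at the parameter value `ψ(λ,t)`, with contact
point `(κ₁(λ,t), κ₂(λ,t), κ₃(λ,t))`. -/
theorem stmt_3 (l t : ℝ) (h0 : l ≠ 0) (h1 : l ≠ 1)
    (ht : t ∈ Set.Ioo (-(2 * π / 3)) (2 * π / 3)) (hd : 1 + l * cos t ≠ 0) :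
    let ψ := l * (1 + cos t) / (1 + l * cos t)
    let F : ℝ → ℝ := fun m => f l (ω₁ m t) (ω₂ m t) (ω₃ m t)
    ω₁ ψ t = κ₁ l t ∧ ω₂ ψ t = κ₂ l t ∧ ω₃ ψ t = κ₃ l t ∧
      F ψ = 0 ∧ deriv F ψ = 0 := by
  intro ψ F
  have hψ : ψ = l * (1 + cos t) / (1 + l * cos t) := rfl
  have hc23 : cos (2 * π / 3) = -(1/2) := by
    have h : (2 * π / 3 : ℝ) = π - π / 3 := by ring
    rw [h, Real.cos_pi_sub, Real.cos_pi_div_three]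
  have hct : -(1/2) < cos t := by
    obtain ⟨ht1, ht2⟩ := ht
    have habs : |t| < 2 * π / 3 := abs_lt.mpr ⟨by linarith, ht2⟩
    have hle : 2 * π / 3 ≤ π := by nlinarith [Real.pi_pos]
    have h := Real.cos_lt_cos_of_nonneg_of_le_pi (abs_nonneg t) hle habs
    rw [Real.cos_abs, hc23] at h
    exact h
  have h1c : (0:ℝ) < 1 + cos t := by linarith
  have h1c' : (1:ℝ) + cos t ≠ 0 := h1c.ne'
  have h2c : (0:ℝ) ≤ 1 + 2 * cos t := by linarith
  have hq2 : Real.sqrt (1 + 2 * cos t) ^ 2 = 1 + 2 * cos t := Real.sq_sqrt h2c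
  have hs2 : sin t ^ 2 = 1 - cos t ^ 2 := Real.sin_sq t
  have hl1 : (1:ℝ) - l ≠ 0 := sub_ne_zero.mpr (Ne.symm h1)
  have hll : (1:ℝ) - l + l ^ 2 ≠ 0 := by nlinarith [sq_nonneg (2*l - 1)]
  have e1 : ω₁ ψ t = κ₁ l t := by
    simp only [hψ, ω₁, κ₁]; field_simp; ring_nf
  have e2 : ω₂ ψ t = κ₂ l t := by
    simp only [hψ, ω₂, κ₂]; field_simp; ring
  have e3 : ω₃ ψ t = κ₃ l t := by
    simp only [hψ, ω₃, κ₃]; field_simp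
  have e4 : F ψ = 0 := by
    have : F ψ = f l (κ₁ l t) (κ₂ l t) (κ₃ l t) := by
      show f l (ω₁ ψ t) (ω₂ ψ t) (ω₃ ψ t) = _
      rw [e1, e2, e3]
    rw [this]
    simp only [f, κ₁, κ₂, κ₃, div_pow, mul_pow, hq2, hs2]
    field_simp
    ring
  refine ⟨e1, e2, e3, e4, ?_⟩
  have hFeq : F = fun m : ℝ =>
      (sin t ^ 2 / (1 - l) + (1 + cos t - cos t / (1 + cos t)) ^ 2 / (1 - l + l ^ 2)
        + (Real.sqrt (1 + 2 * cos t) / (1 + cos t)) ^ 2 / l) * m ^ 2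
      + (-(2 * (sin t ^ 2) / (1 - l))
        + 2 * (-cos t - l) * (1 + cos t - cos t / (1 + cos t)) / (1 - l + l ^ 2)) * m
      + (sin t ^ 2 / (1 - l) + (-cos t - l) ^ 2 / (1 - l + l ^ 2) - 1) := by
    funext m
    show f l (ω₁ m t) (ω₂ m t) (ω₃ m t) = _
    simp only [f, ω₁, ω₂, ω₃]
    ring
  rw [hFeq, quad_deriv]
  simp only [div_pow, hq2, hs2]
  rw [hψ]
  have hd' : (1:ℝ) + cos t * l ≠ 0 := by rwa [mul_comm] at hd
  field_simp
  ring
end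

section
/- Let λ be a real number with λ ≠ 0 and λ ≠ 1, and let t ∈ (−2π/3, 2π/3) with 1 + λ·cos t ≠ 0. Then the derivative of the function μ ↦ f_μ(κ₁(λ,t), κ₂(λ,t), κ₃(λ,t)) at μ = λ equals 0; that is, the touching curve point (κ₁(λ,t), κ₂(λ,t), κ₃(λ,t)) satisfies both f_λ = 0 and ∂f_λ/∂λ = 0. -/
open Real

/-- The touching curve point `(κ₁(λ,t), κ₂(λ,t), κ₃(λ,t))` satisfies both `f_λ = 0`
and `∂f_λ/∂λ = 0`: the derivative of `μ ↦ f_μ` at the point, taken at `μ = λ`,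
vanishes. -/
theorem stmt_4 (l t : ℝ) (h0 : l ≠ 0) (h1 : l ≠ 1)
    (ht : t ∈ Set.Ioo (-(2 * π / 3)) (2 * π / 3)) (hd : 1 + l * cos t ≠ 0) :
    f l (κ₁ l t) (κ₂ l t) (κ₃ l t) = 0 ∧
      deriv (fun μ => f μ (κ₁ l t) (κ₂ l t) (κ₃ l t)) l = 0 := by
  obtain ⟨ht1, ht2⟩ := ht
  have hπ : (0:ℝ) < π := Real.pi_pos
  have habs : |t| ≤ 2 * π / 3 := abs_le.2 ⟨le_of_lt ht1, le_of_lt ht2⟩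
  have hcos23 : Real.cos (2 * π / 3) = -(1/2) := by
    have h : (2:ℝ) * π / 3 = π - π / 3 := by ring
    rw [h, Real.cos_pi_sub, Real.cos_pi_div_three]
  have hcc : Real.cos (2 * π / 3) ≤ Real.cos |t| :=
    Real.cos_le_cos_of_nonneg_of_le_pi (abs_nonneg t) (by linarith) habs
  have hct : (0:ℝ) ≤ 1 + 2 * cos t := by
    rw [← Real.cos_abs t]; rw [hcos23] at hcc; linarith
  have hs : sin t ^ 2 = 1 - cos t ^ 2 := by
    have := sin_sq_add_cos_sq t; linarith
  have h1ne : (1:ℝ) - l ≠ 0 := sub_ne_zero.2 (Ne.symm h1)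
  have h2ne : (1:ℝ) - l + l ^ 2 ≠ 0 := by nlinarith [sq_nonneg (l - 1/2)]
  set x := κ₁ l t with hxd
  set y := κ₂ l t with hyd
  set z := κ₃ l t with hzd
  have hx2 : x ^ 2 = (1 - l) ^ 2 * (1 - cos t ^ 2) / (1 + l * cos t) ^ 2 := by
    rw [hxd, κ₁, div_pow, mul_pow, hs]
  have hz2 : z ^ 2 = l ^ 2 * (1 + 2 * cos t) / (1 + l * cos t) ^ 2 := by
    rw [hzd, κ₃, div_pow, mul_pow, Real.sq_sqrt hct]
  have hA : y - l + 1/2 = -((1 - l + l ^ 2) * cos t) / (1 + l * cos t) := by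
    rw [hyd, κ₂]; field_simp; ring
  constructor
  · rw [f, hx2, hA, hz2, div_pow]
    field_simp
    ring
  · have t1 : HasDerivAt (fun μ : ℝ => x ^ 2 / (1 - μ))
        ((0 * (1 - l) - x ^ 2 * (-1)) / (1 - l) ^ 2) l :=
      (hasDerivAt_const l (x ^ 2)).div ((hasDerivAt_id l).const_sub 1) h1ne
    have hN : HasDerivAt (fun μ : ℝ => y - μ + 1/2) (-1) l := by
      simpa using ((hasDerivAt_id l).const_sub y).add_const (1/2 : ℝ)
    have hN2 : HasDerivAt (fun μ : ℝ => (y - μ + 1/2) ^ 2)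
        (2 * (y - l + 1/2) ^ 1 * (-1)) l := by
      exact (hN.pow 2).congr_deriv (by norm_num)
    have hDen : HasDerivAt (fun μ : ℝ => 1 - μ + μ ^ 2) (-1 + 2 * l ^ 1) l := by
      exact (((hasDerivAt_id l).const_sub 1).add (hasDerivAt_pow 2 l)).congr_deriv (by norm_num)
    have t2 : HasDerivAt (fun μ : ℝ => (y - μ + 1/2) ^ 2 / (1 - μ + μ ^ 2))
        ((2 * (y - l + 1/2) ^ 1 * (-1) * (1 - l + l ^ 2) -
          (y - l + 1/2) ^ 2 * (-1 + 2 * l ^ 1)) / (1 - l + l ^ 2) ^ 2) l :=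
      hN2.div hDen h2ne
    have t3 : HasDerivAt (fun μ : ℝ => z ^ 2 / μ)
        ((0 * l - z ^ 2 * 1) / l ^ 2) l :=
      (hasDerivAt_const l (z ^ 2)).div (hasDerivAt_id l) h0
    have H : HasDerivAt (fun μ => f μ x y z)
        ((0 * (1 - l) - x ^ 2 * (-1)) / (1 - l) ^ 2 +
          (2 * (y - l + 1/2) ^ 1 * (-1) * (1 - l + l ^ 2) -
            (y - l + 1/2) ^ 2 * (-1 + 2 * l ^ 1)) / (1 - l + l ^ 2) ^ 2 +
          (0 * l - z ^ 2 * 1) / l ^ 2) l := by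
      simp only [f]
      exact ((t1.add t2).add t3).sub_const 1
    rw [H.deriv, pow_one, hx2, hA, hz2]
    field_simp
    ring
end

section
/- Let t be a real number with cos t ≠ 0 and 1 + 2cos t ≥ 0, and set x = −tan t, y = 1/2 + 1/cos t, z = √(1+2cos t)/cos t (the parametrization of the curve C_{±∞}). Then the following three identities hold: (y + 1/2)² − z² = 1 (projection onto the plane x=0 is part of a hyperbola), (x² − z²)² − 2(x² + z²) = 3 (projection onto the plane y=0), and (y − 1/2)² − x² = 1 (projection onto the plane z=0 is part of a hyperbola). -/
open Real

/-- The projections of the curve `C_{±∞}`, parametrized by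
`t ↦ (−tan t, 1/2 + 1/cos t, √(1+2cos t)/cos t)`, onto the coordinate planes
satisfy the stated algebraic equations (two hyperbolas and a quartic). -/
theorem stmt_9 (t : ℝ) (hc : cos t ≠ 0) (h2 : 1 + 2 * cos t ≥ 0) :
    let x := -tan t
    let y := 1/2 + 1 / cos t
    let z := Real.sqrt (1 + 2 * cos t) / cos t
    (y + 1/2) ^ 2 - z ^ 2 = 1 ∧
    (x ^ 2 - z ^ 2) ^ 2 - 2 * (x ^ 2 + z ^ 2) = 3 ∧
    (y - 1/2) ^ 2 - x ^ 2 = 1 := by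
  intro x y z
  have hs : sin t ^ 2 = 1 - cos t ^ 2 := by
    have := sin_sq_add_cos_sq t; linarith
  have hx2 : x ^ 2 = (1 - cos t ^ 2) / cos t ^ 2 := by
    simp only [x, tan_eq_sin_div_cos]
    rw [← hs]; field_simp
  have hz2 : z ^ 2 = (1 + 2 * cos t) / cos t ^ 2 := by
    simp only [z, div_pow, Real.sq_sqrt h2]
  refine ⟨?_, ?_, ?_⟩
  · simp only [y, hz2]; field_simp; ring
  · rw [hx2, hz2]; field_simp; ring
  · simp only [y, hx2]; field_simp; ring
end

section
/- Let t ∈ (−2π/3, 2π/3) with t ≠ 0, and set x = κ₁(−1,t) = 2sin t/(1−cos t), y = κ₂(−1,t) = −3(1+cos t)/(2(1−cos t)), z = κ₃(−1,t) = −√(1+2cos t)/(1−cos t) (a parametrization of the touching curve C_{−1}). Then the following three identities hold: (y − 1/2)² − 3z² = 1 (the projection onto the plane x=0 lies on a hyperbola), 3x⁴ + 8x² − 64z² = 16 (the projection onto the plane y=0 lies on this quartic), and y = −(3/8)x² (the projection onto the plane z=0 lies on a parabola). -/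
open Real

/-- The projections of the touching curve `C_{−1}`, parametrized by
`t ↦ (2sin t/(1−cos t), −3(1+cos t)/(2(1−cos t)), −√(1+2cos t)/(1−cos t))`,
onto the coordinate planes lie on a hyperbola, a quartic, and a parabola,
respectively. -/
theorem stmt_11 (t : ℝ) (ht : t ∈ Set.Ioo (-(2 * π / 3)) (2 * π / 3)) (h0 : t ≠ 0) :
    let x := 2 * sin t / (1 - cos t)
    let y := -(3 * (1 + cos t)) / (2 * (1 - cos t))
    let z := -Real.sqrt (1 + 2 * cos t) / (1 - cos t)
    (y - 1/2) ^ 2 - 3 * z ^ 2 = 1 ∧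
    3 * x ^ 4 + 8 * x ^ 2 - 64 * z ^ 2 = 16 ∧
    y = -(3/8) * x ^ 2 := by
  obtain ⟨ht1, ht2⟩ := ht
  have hπ : (0:ℝ) < π := Real.pi_pos
  have habs : |t| < 2 * π / 3 := abs_lt.mpr ⟨by linarith, ht2⟩
  have habs0 : 0 < |t| := abs_pos.mpr h0
  have hmem : |t| ∈ Set.Icc (0:ℝ) π := ⟨abs_nonneg t, by linarith⟩
  have hgt : cos t > -1/2 := by
    have h1 : cos (2 * π / 3) < cos |t| :=
      Real.strictAntiOn_cos hmem ⟨by positivity, by linarith⟩ habs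
    have h2 : cos (2 * π / 3) = -1/2 := by
      have : (2 * π / 3 : ℝ) = π - π / 3 := by ring
      rw [this, Real.cos_pi_sub, Real.cos_pi_div_three]; norm_num
    rw [Real.cos_abs] at h1
    linarith
  have hlt : cos t < 1 := by
    have h1 : cos |t| < cos 0 :=
      Real.strictAntiOn_cos ⟨le_refl _, le_of_lt hπ⟩ hmem habs0
    rw [Real.cos_abs, Real.cos_zero] at h1
    exact h1
  have hden : (1 : ℝ) - cos t ≠ 0 := by linarith
  have hsq : Real.sqrt (1 + 2 * cos t) ^ 2 = 1 + 2 * cos t :=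
    Real.sq_sqrt (by linarith)
  have hsin : sin t ^ 2 = 1 - cos t ^ 2 := by
    have := sin_sq_add_cos_sq t; linarith
  refine ⟨?_, ?_, ?_⟩
  · field_simp
    nlinarith [hsq, sq_nonneg (1 - cos t), show √(1 + cos t * 2) ^ 2 = 1 + 2 * cos t by rw [mul_comm (cos t) 2]; exact hsq]
  · field_simp
    have h4 : sin t ^ 4 = (1 - cos t ^ 2) ^ 2 := by
      rw [show sin t ^ 4 = (sin t ^ 2) ^ 2 by ring, hsin]
    linear_combination 48 * h4 + (32 * (1 - cos t) ^ 2) * hsin -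
      (64 * (1 - cos t) ^ 2) * hsq
  · field_simp
    nlinarith [hsin, sq_nonneg (1 - cos t)]
end

section
/- Let λ be a real number with λ < 0 or λ > 1, and set c = (1−λ+ρ(λ))/λ. Then c ∈ (−1/2, 1), c ≠ 0, and (1+2c)/((2+c)·c) = λ. (That is, t ↦ cos t = (1−λ+ρ(λ))/λ inverts the function φ(t) = (1+2cos t)/((2+cos t)cos t) used to parametrize the edge of regression.) -/
/-- `ρ(λ) = sgn(λ)·√(1−λ+λ²)`. -/
noncomputable def ρ (l : ℝ) : ℝ := Real.sign l * Real.sqrt (1 - l + l ^ 2)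

/-- For `λ < 0` or `λ > 1`, the value `c = (1−λ+ρ(λ))/λ` lies in `(−1/2, 1)`, is
nonzero, and satisfies `(1+2c)/((2+c)c) = λ`: `cos t = (1−λ+ρ(λ))/λ` inverts the
function `φ(t) = (1+2cos t)/((2+cos t)cos t)` used to parametrize the edge of
regression. -/
theorem stmt_14 (l : ℝ) (hl : l < 0 ∨ 1 < l) :
    let c := (1 - l + ρ l) / l
    c ∈ Set.Ioo (-(1/2) : ℝ) 1 ∧ c ≠ 0 ∧ (1 + 2 * c) / ((2 + c) * c) = l := by
  have hpos : (0:ℝ) < 1 - l + l ^ 2 := by nlinarith [sq_nonneg (2*l - 1)]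
  have hs : Real.sqrt (1 - l + l ^ 2) ^ 2 = 1 - l + l ^ 2 := Real.sq_sqrt hpos.le
  have hsnn : (0:ℝ) ≤ Real.sqrt (1 - l + l ^ 2) := Real.sqrt_nonneg _
  set s := Real.sqrt (1 - l + l ^ 2) with hsdef
  intro c
  have hl0 : l ≠ 0 := by rcases hl with h | h <;> intro h0 <;> rw [h0] at h <;> linarith
  rcases hl with h | h
  · -- l < 0
    have hρ : ρ l = -s := by rw [ρ, Real.sign_of_neg h]; ring
    have hc : c = (1 - l - s) / l := by show (1 - l + ρ l) / l = _; rw [hρ]; ring_nf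
    have hnum : 0 < 1 - l - s := by nlinarith
    have hc0 : c < 0 := by rw [hc]; exact div_neg_of_pos_of_neg hnum h
    have hlb : -(1/2 : ℝ) < c := by
      rw [hc, lt_div_iff_of_neg h]
      nlinarith
    have h2c : (0:ℝ) < 2 + c := by linarith
    refine ⟨⟨hlb, by linarith⟩, ne_of_lt hc0, ?_⟩
    rw [div_eq_iff (mul_ne_zero (ne_of_gt h2c) (ne_of_lt hc0)), hc]
    field_simp
    nlinarith [hs, sq_nonneg s]
  · -- 1 < l
    have hρ : ρ l = s := by rw [ρ, Real.sign_of_pos (by linarith : (0:ℝ) < l)]; ring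
    have hc : c = (1 - l + s) / l := by show (1 - l + ρ l) / l = _; rw [hρ]
    have hnum : 0 < 1 - l + s := by nlinarith
    have hc0 : 0 < c := by rw [hc]; positivity
    have hub : c < 1 := by
      rw [hc, div_lt_one (by linarith : (0:ℝ) < l)]
      nlinarith
    have h2c : (0:ℝ) < 2 + c := by linarith
    refine ⟨⟨by linarith, hub⟩, ne_of_gt hc0, ?_⟩
    rw [div_eq_iff (mul_ne_zero (ne_of_gt h2c) (ne_of_gt hc0)), hc]
    field_simp
    nlinarith [hs, sq_nonneg s]
end

section
/- Let λ be a real number with λ < 0 or λ > 1, and set t = −arccos((1−λ+ρ(λ))/λ). Then for every m ∈ ℝ: f_λ(ω₁(m,t), ω₂(m,t), ω₃(m,t)) = 0. (That is, the generating line of the extended oloid determined by this value of t lies entirely on the one-sheeted hyperboloid Q_λ = {f_λ = 0}; these are the common generating lines of Q_λ and the extended oloid.) -/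
open Real

lemma key (l c m : ℝ) (h0 : l ≠ 0) (h1 : (1:ℝ) - l ≠ 0) (h2 : (0:ℝ) < 1 - l + l^2)
    (hc : (0:ℝ) < 1 + c) (hP : (l*c - 1 + l)^2 = 1 - l + l^2) :
    (1-m)^2 * (1 - c^2) / (1-l) + ((1-m)*(-(1/2)-c) + m*(1/2 - c/(1+c)) - l + 1/2)^2/(1-l+l^2)
      + m^2*(1+2*c)/(1+c)^2/l - 1 = 0 := by
  have h2' : (1:ℝ) - l + l^2 ≠ 0 := ne_of_gt h2
  have hc' : (1:ℝ) + c ≠ 0 := ne_of_gt hc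
  field_simp
  apply mul_left_cancel₀ h0
  linear_combination ((-4:ℝ)*m^2 + (8:ℝ)*l*m + (-4:ℝ)*l^2 + (8:ℝ)*c*l*m + (-8:ℝ)*c*l*m^2 + (-8:ℝ)*c*l^2 + (8:ℝ)*c*l^2*m + (-4:ℝ)*c^2*l^2 + (8:ℝ)*c^2*l^2*m + (-4:ℝ)*c^2*l^2*m^2) * hP


set_option maxHeartbeats 1000000 in
/-- For `λ < 0` or `λ > 1` and `t = −arccos((1−λ+ρ(λ))/λ)`, the generating line of
the extended oloid determined by `t` lies entirely on the one-sheeted hyperboloid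
`Q_λ = {f_λ = 0}`: these are the common generating lines of `Q_λ` and the extended
oloid. -/
theorem stmt_16 (l : ℝ) (hl : l < 0 ∨ 1 < l) :
    let t := -Real.arccos ((1 - l + ρ l) / l)
    ∀ m : ℝ, f l (ω₁ m t) (ω₂ m t) (ω₃ m t) = 0 := by
  intro t m
  have ht : t = -Real.arccos ((1 - l + ρ l) / l) := rfl
  have h2 : (0:ℝ) < 1 - l + l^2 := by nlinarith [sq_nonneg (l - 1), sq_nonneg l]
  have h0 : l ≠ 0 := by rcases hl with h | h <;> [exact ne_of_lt h; positivity]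
  have h1 : (1:ℝ) - l ≠ 0 := by
    rcases hl with h | h
    · exact ne_of_gt (by linarith)
    · exact ne_of_lt (by linarith)
  have hs0 : 0 ≤ Real.sqrt (1 - l + l^2) := Real.sqrt_nonneg _
  have hs2 : Real.sqrt (1 - l + l^2) ^ 2 = 1 - l + l^2 := Real.sq_sqrt h2.le
  rw [f, ω₁, ω₂, ω₃, ht]
  obtain ⟨c, hcdef⟩ : ∃ c', (1 - l + ρ l) / l = c' := ⟨_, rfl⟩
  rw [hcdef]
  set s := Real.sqrt (1 - l + l^2) with hsdef
  have hlc : l * c = 1 - l + ρ l := by rw [← hcdef]; field_simp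
  have hkey : ρ l ^ 2 = 1 - l + l^2 ∧ -1 ≤ c ∧ c ≤ 1 ∧ 0 < 1 + c ∧ 0 ≤ 1 + 2*c := by
    rcases hl with h | h
    · have hρ : ρ l = -s := by
        rw [ρ, Real.sign_of_neg h]; push_cast; rw [hsdef]; ring_nf
      have hs1 : 1 < s := by nlinarith
      have hρ2 : ρ l ^ 2 = 1 - l + l^2 := by rw [hρ]; nlinarith
      have hcm : -1 ≤ c := by
        rw [← hcdef, hρ, le_div_iff_of_neg h]; nlinarith
      have hcu : c ≤ 1 := by
        rw [← hcdef, hρ, div_le_iff_of_neg h]; nlinarith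
      have hc1 : 0 < 1 + c := by
        have h11 : l * (1 + c) = 1 + ρ l := by rw [mul_add, hlc]; ring
        nlinarith [h11, hρ]
      have hc2 : 0 ≤ 1 + 2*c := by
        have h22 : l * (1 + 2*c) = 2 - l + 2 * ρ l := by rw [mul_add]; nlinarith [hlc]
        have hsge : 1 - l/2 ≤ s := by nlinarith
        nlinarith [h22, hρ]
      exact ⟨hρ2, hcm, hcu, hc1, hc2⟩
    · have hρ : ρ l = s := by
        rw [ρ, Real.sign_of_pos (by linarith)]; rw [hsdef]; ring_nf
      have hsp : 0 < s := by nlinarith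
      have hρ2 : ρ l ^ 2 = 1 - l + l^2 := by rw [hρ]; nlinarith
      have hcm : -1 ≤ c := by
        rw [← hcdef, hρ, le_div_iff₀ (by linarith : (0:ℝ) < l)]; nlinarith
      have hcu : c ≤ 1 := by
        rw [← hcdef, hρ, div_le_iff₀ (by linarith : (0:ℝ) < l)]; nlinarith
      have hc1 : 0 < 1 + c := by
        have h11 : l * (1 + c) = 1 + s := by rw [mul_add, hlc, hρ]; ring
        nlinarith [h11]
      have hc2 : 0 ≤ 1 + 2*c := by
        have h22 : l * (1 + 2*c) = 2 - l + 2*s := by rw [mul_add]; nlinarith [hlc, hρ]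
        have hsge : l/2 - 1 ≤ s := by nlinarith
        nlinarith [h22]
      exact ⟨hρ2, hcm, hcu, hc1, hc2⟩
  obtain ⟨hρ2, hcm, hcu, hc1, hc2⟩ := hkey
  have hP : (l*c - 1 + l)^2 = 1 - l + l^2 := by
    have hx : l*c - 1 + l = ρ l := by rw [hlc]; ring
    rw [hx, hρ2]
  have hthis := key l c m h0 h1 h2 hc1 hP
  have hsin : Real.sin (-(Real.arccos c)) ^ 2 = 1 - c^2 := by
    have h := Real.sin_sq_add_cos_sq (-(Real.arccos c))
    rw [Real.cos_neg, Real.cos_arccos hcm hcu] at h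
    linarith
  have hsq : Real.sqrt (1 + 2*c) ^ 2 = 1 + 2*c := Real.sq_sqrt hc2
  rw [Real.cos_neg, Real.cos_arccos hcm hcu]
  have e1 : ((1-m) * Real.sin (-(Real.arccos c)))^2 = (1-m)^2 * (1 - c^2) := by
    rw [mul_pow, hsin]
  have e3 : (m * Real.sqrt (1+2*c) / (1+c))^2 = m^2*(1+2*c)/(1+c)^2 := by
    rw [div_pow, mul_pow, hsq]
  rw [e1, e3]
  exact hthis
end
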